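/- Let ω be an infinite word over a finite alphabet A and let k be a positive integer or infinity. If the number of k-Abelian equivalence classes of factors of ω of length n₀ is strictly less than q^{(k)}(n₀) for some n₀ ≥ 1, where q^{(k)}(n) = n+1 for n ≤ 2k−1 and q^{(k)}(n) = 2k for n ≥ 2k, then ω is ultimately periodic. -/

import Mathlib

/-- Number of occurrences of `x` as a factor of `w`. -/
def occ {A : Type*} [DecidableEq A] (w x : List A) : ℕ :=
  ((List.range (w.length + 1)).filter (fun i => decide (x <+: w.drop i))).length

/-- `k`-Abelian equivalence, for `k` a positive integer or `∞`. -/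
def KAbEqE {A : Type*} [DecidableEq A] (k : ℕ∞) (u v : List A) : Prop :=
  ∀ x : List A, x ≠ [] → (x.length : ℕ∞) ≤ k → occ u x = occ v x

/-- `u` is a factor of the infinite word `ω`. -/
def IsFactorOf {A : Type*} (u : List A) (ω : ℕ → A) : Prop :=
  ∃ i : ℕ, u = (List.range u.length).map fun j => ω (i + j)

/-- `ω` is ultimately periodic. -/
def UltimatelyPeriodic {A : Type*} (ω : ℕ → A) : Prop :=
  ∃ p : ℕ, 1 ≤ p ∧ ∃ N : ℕ, ∀ i ≥ N, ω (i + p) = ω i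

/-- The setoid of `k`-Abelian equivalence on the factors of `ω` of length `n`. -/
def factorSetoidE {A : Type*} [DecidableEq A] (ω : ℕ → A) (k : ℕ∞) (n : ℕ) :
    Setoid {u : List A // u.length = n ∧ IsFactorOf u ω} where
  r u v := KAbEqE k u.1 v.1
  iseqv := ⟨fun _ _ _ _ => rfl, fun h x hx hxk => (h x hx hxk).symm,
    fun h₁ h₂ x hx hxk => (h₁ x hx hxk).trans (h₂ x hx hxk)⟩

/-- The `k`-Abelian complexity of `ω`. -/
noncomputable def kabComplexityE {A : Type*} [DecidableEq A] (ω : ℕ → A) (k : ℕ∞) (n : ℕ) : ℕ :=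
  Nat.card (Quotient (factorSetoidE ω k n))

/-- The auxiliary function `q⁽ᵏ⁾`: `n + 1` for `n ≤ 2k - 1` and `2k` for `n ≥ 2k`. -/
noncomputable def qAux (k : ℕ∞) (n : ℕ) : ℕ :=
  if (n : ℕ∞) < 2 * k then n + 1 else (2 * k).toNat

/-!
Suppose `ω` is not ultimately periodic and let `C k n` be the number of `k`-Abelian classes of
recurrent factors of `ω` of length `n`. For every length there is a right special recurrent factor
`w` (`w x`, `w y` both recurrent, `x ≠ y`), since otherwise the windows of that length would
eventually determine the next letter and force periodicity, and by counting also a left special one.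

Deleting the first and the last letter maps `(k+1)`-classes of length `n + 2` onto `k`-classes of
length `n`. A left special pair `x w, y w` gives two distinct classes in one fibre, a right special
pair `w' x', w' y'` two distinct classes in one fibre, and the two pairs of classes differ, because
for `k ≥ 1` a `(k+1)`-class determines the first and the last letter. So
`C (k+1) (n+2) ≥ C k n + 2`. Together with `C k 0 = 1` and `C k n ≥ 2` for `k, n ≥ 1` (if all
recurrent factors of length `n` had the same Parikh vector, `ω` would ultimately have period `n`),
this gives `C k n ≥ min (n + 1) (2k) = q⁽ᵏ⁾(n)`, and `C k n` is at most the `k`-Abelian complexity.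
Recurrent factors are used because they extend to recurrent factors on both sides.
-/

open Finset in
theorem Finset.card_image_add_two_le_of_mem_sdiff {α β : Type*} [DecidableEq α] [DecidableEq β]
    {f : α → β} {s : Finset α} {x y x' y' : α} (hx : x ∈ s) (hy : y ∈ s) (hxy : x ≠ y)
    (hx' : x' ∈ s \ {x, y}) (hy' : y' ∈ s \ {x, y}) (hfx : f x' = f x) (hfy : f y' = f y) :
    #(s.image f) + 2 ≤ #s := by
  have hsub : s.image f ⊆ (s \ {x, y}).image f := by
    intro b hb
    obtain ⟨z, hz, rfl⟩ := mem_image.1 hb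
    by_cases hzx : z = x
    · exact mem_image.2 ⟨x', hx', hzx ▸ hfx⟩
    by_cases hzy : z = y
    · exact mem_image.2 ⟨y', hy', hzy ▸ hfy⟩
    exact mem_image_of_mem f (by simp [hz, hzx, hzy])
  have hcard : #(s \ {x, y}) + 2 = #s := by
    rw [card_sdiff_of_subset (by simp [insert_subset_iff, hx, hy]), card_pair hxy]
    have : 2 ≤ #s := card_pair hxy ▸ card_le_card (by simp [insert_subset_iff, hx, hy])
    omega
  have := (card_le_card hsub).trans card_image_le
  omega

open Finset in
theorem Finset.card_image_add_two_le {α β : Type*} [DecidableEq α] [DecidableEq β]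
    {f : α → β} {s : Finset α} {a₁ a₂ b₁ b₂ : α} (ha₁ : a₁ ∈ s) (ha₂ : a₂ ∈ s) (hb₁ : b₁ ∈ s)
    (hb₂ : b₂ ∈ s) (ha : a₁ ≠ a₂) (hb : b₁ ≠ b₂) (hfa : f a₁ = f a₂) (hfb : f b₁ = f b₂)
    (hab : ({a₁, a₂} : Finset α) ≠ {b₁, b₂}) : #(s.image f) + 2 ≤ #s := by
  by_cases hf : f a₁ = f b₁
  · obtain ⟨a, ha, hab'⟩ : ∃ a ∈ ({a₁, a₂} : Finset α), a ∉ ({b₁, b₂} : Finset α) := by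
      by_contra! hsub
      exact hab (eq_of_subset_of_card_le hsub (by rw [card_pair ha, card_pair hb]))
    simp only [mem_insert, mem_singleton] at ha hab'
    have has : a ∈ s := by rcases ha with rfl | rfl <;> assumption
    have hfa' : f a = f b₁ := by rcases ha with rfl | rfl <;> simp [hf, ← hfa]
    have ha' : a ∈ s \ {b₁, b₂} := by simp [has, hab']
    exact card_image_add_two_le_of_mem_sdiff hb₁ hb₂ hb ha' ha' hfa' (hfa'.trans hfb)
  · exact card_image_add_two_le_of_mem_sdiff ha₂ hb₂ (by rintro rfl; exact hf (hfa.trans hfb.symm))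
      (x' := a₁) (y' := b₁) (by simp [ha₁, ha]; rintro rfl; exact hf hfb.symm)
      (by simp [hb₁, hb]; rintro rfl; exact hf hfa) hfa hfb

theorem List.append_singleton_suffix_append_singleton_iff {α : Type*} {z w : List α} {a b : α} :
    z ++ [a] <:+ w ++ [b] ↔ a = b ∧ z <:+ w := by
  rw [← List.reverse_prefix]
  simp [List.reverse_prefix]

theorem Filter.frequently_atTop_add_one_iff {p : ℕ → Prop} :
    (∃ᶠ i in atTop, p (i + 1)) ↔ ∃ᶠ i in atTop, p i := by
  rw [← frequently_map, map_add_atTop_eq_nat]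

section Occurrences

variable {A : Type*} [DecidableEq A]

theorem occ_nil {z : List A} (hz : z ≠ []) : occ [] z = 0 := by
  simp [occ, hz]

theorem occ_cons (b : A) (w z : List A) :
    occ (b :: w) z = (if z <+: b :: w then 1 else 0) + occ w z := by
  simp only [occ, ← List.countP_eq_length_filter, List.length_cons]
  rw [List.range_succ_eq_map, List.countP_cons, List.countP_map]
  simp only [List.drop_zero, decide_eq_true_eq]
  split_ifs <;> simp [Function.comp_def]; omega

theorem occ_eq_zero_of_length_lt {w z : List A} (h : w.length < z.length) : occ w z = 0 := by
  simp only [occ, List.length_eq_zero_iff, List.filter_eq_nil_iff, decide_eq_true_eq]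
  intro i _ hz
  have := hz.length_le
  simp at this
  omega

theorem occ_append_singleton (b : A) (w : List A) {z : List A} (hz : z ≠ []) :
    occ (w ++ [b]) z = occ w z + (if z <:+ w ++ [b] then 1 else 0) := by
  induction w with
  | nil =>
    have hpre : z <+: [b] ↔ z = [b] := by
      simpa [hz] using (List.prefix_concat_iff (l₂ := []) (a := b) (l₁ := z))
    simp [occ_cons, occ_nil hz, hpre, List.suffix_cons_iff, hz]
  | cons c w ih =>
    have hpre : z <+: c :: (w ++ [b]) ↔ z = c :: (w ++ [b]) ∨ z <+: c :: w :=
      List.prefix_concat_iff (l₂ := c :: w)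
    have h₁ : ¬ (z = c :: (w ++ [b]) ∧ z <+: c :: w) := fun ⟨h, h'⟩ => by
      simpa [h] using h'.length_le
    have h₂ : ¬ (z = c :: (w ++ [b]) ∧ z <:+ w ++ [b]) := fun ⟨h, h'⟩ => by
      simpa [h] using h'.length_le
    simp only [List.cons_append, occ_cons, ih, hpre, List.suffix_cons_iff]
    split_ifs <;> simp_all <;> omega

theorem occ_eq_occ_tail_dropLast {u z : List A} (hz : z ≠ []) (hzu : z.length < u.length) :
    occ u z = (if z <+: u then 1 else 0) + occ u.tail.dropLast z + if z <:+ u then 1 else 0 := by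
  have hz₁ := List.length_pos_of_ne_nil hz
  obtain _ | ⟨b, t⟩ := u
  · simp at hzu
  have ht : t ≠ [] := List.ne_nil_of_length_pos (by simp at hzu; omega)
  have hsuf : z <:+ b :: t ↔ z <:+ t := by
    rw [List.suffix_cons_iff, or_iff_right]
    rintro rfl
    simp at hzu
  conv_lhs => rw [occ_cons, ← List.dropLast_append_getLast ht, occ_append_singleton _ _ hz,
    List.dropLast_append_getLast ht]
  simp only [hsuf, List.tail_cons, add_assoc]

variable {k j : ℕ∞} {u v : List A}

theorem KAbEqE.mono (hjk : j ≤ k) (h : KAbEqE k u v) : KAbEqE j u v :=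
  fun x hx hxj => h x hx (hxj.trans hjk)

section Fintype

variable [Fintype A]

theorem sum_occ_singleton (u : List A) : ∑ a, occ u [a] = u.length := by
  induction u with
  | nil => simp [occ_nil]
  | cons b w ih => simp [occ_cons, Finset.sum_add_distrib, ih, add_comm]

theorem occ_eq_sum_occ_cons (u : List A) {z : List A} (hz : z ≠ []) :
    occ u z = ∑ a, occ u (a :: z) + if z <+: u then 1 else 0 := by
  induction u with
  | nil => simp [occ_nil, hz]
  | cons b w ih =>
    have hsum : ∑ a, (if a :: z <+: b :: w then 1 else 0) = if z <+: w then 1 else 0 := by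
      by_cases h : z <+: w <;> simp [List.cons_prefix_cons, h]
    rw [occ_cons, ih]
    simp only [occ_cons, Finset.sum_add_distrib, hsum]
    omega

theorem occ_eq_sum_occ_append_singleton (u : List A) {z : List A} (hz : z ≠ []) :
    occ u z = ∑ a, occ u (z ++ [a]) + if z <:+ u then 1 else 0 := by
  induction u using List.reverseRecOn with
  | nil => simp [occ_nil, hz]
  | append_singleton w b ih =>
    have hsum : ∑ a, (if z ++ [a] <:+ w ++ [b] then 1 else 0) = if z <:+ w then 1 else 0 := by
      by_cases h : z <:+ w <;> simp [List.append_singleton_suffix_append_singleton_iff, h]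
    rw [occ_append_singleton _ _ hz, ih]
    simp only [occ_append_singleton _ _ (List.concat_ne_nil _ _), Finset.sum_add_distrib, hsum]

theorem KAbEqE.length_eq (hk : 1 ≤ k) (h : KAbEqE k u v) : u.length = v.length := by
  rw [← sum_occ_singleton, ← sum_occ_singleton]
  exact Finset.sum_congr rfl fun a _ => h [a] (List.cons_ne_nil _ _) (by simpa using hk)

theorem KAbEqE.prefix_iff (h : KAbEqE k u v) {z : List A} (hzk : (z.length : ℕ∞) + 1 ≤ k) :
    z <+: u ↔ z <+: v := by
  rcases eq_or_ne z [] with rfl | hz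
  · simp
  have hocc := occ_eq_sum_occ_cons u hz
  rw [h z hz (le_trans le_self_add hzk), occ_eq_sum_occ_cons v hz,
    Finset.sum_congr rfl fun a _ => h (a :: z) (List.cons_ne_nil _ _) (by simpa using hzk)] at hocc
  split_ifs at hocc <;> simp_all

theorem KAbEqE.suffix_iff (h : KAbEqE k u v) {z : List A} (hzk : (z.length : ℕ∞) + 1 ≤ k) :
    z <:+ u ↔ z <:+ v := by
  rcases eq_or_ne z [] with rfl | hz
  · simp
  have hocc := occ_eq_sum_occ_append_singleton u hz
  rw [h z hz (le_trans le_self_add hzk), occ_eq_sum_occ_append_singleton v hz,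
    Finset.sum_congr rfl fun a _ => h (z ++ [a]) (List.concat_ne_nil _ _) (by simpa using hzk)]
    at hocc
  split_ifs at hocc <;> simp_all

theorem KAbEqE.head?_eq (hk : 2 ≤ k) (h : KAbEqE k u v) : u.head? = v.head? :=
  Option.ext fun a => by
    simpa [List.singleton_prefix_iff_head?_eq_some] using
      h.prefix_iff (z := [a]) (by simpa [one_add_one_eq_two] using hk)

theorem KAbEqE.getLast?_eq (hk : 2 ≤ k) (h : KAbEqE k u v) : u.getLast? = v.getLast? :=
  Option.ext fun a => by
    simpa [List.singleton_suffix_iff_getLast?_eq_some] using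
      h.suffix_iff (z := [a]) (by simpa [one_add_one_eq_two] using hk)

theorem KAbEqE.tail_dropLast (h : KAbEqE (k + 1) u v) :
    KAbEqE k u.tail.dropLast v.tail.dropLast := by
  intro z hz hzk
  have hlen := h.length_eq le_add_self
  rcases lt_or_ge z.length u.length with hzu | hzu
  · have hzk' : (z.length : ℕ∞) + 1 ≤ k + 1 := by gcongr
    have hocc := h z hz (le_trans le_self_add hzk')
    rw [occ_eq_occ_tail_dropLast hz hzu, occ_eq_occ_tail_dropLast hz (by omega : _ < v.length)]
      at hocc
    simp only [h.prefix_iff hzk', h.suffix_iff hzk'] at hocc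
    omega
  · have := List.length_pos_of_ne_nil hz
    rw [occ_eq_zero_of_length_lt, occ_eq_zero_of_length_lt] <;> simp <;> omega

end Fintype

end Occurrences

open Filter

section Recurrence

variable {A : Type*} (ω : ℕ → A)

def window (i m : ℕ) : List A := (List.range m).map fun j => ω (i + j)

@[simp] theorem length_window (i m : ℕ) : (window ω i m).length = m := by simp [window]

theorem window_succ (i m : ℕ) : window ω i (m + 1) = ω i :: window ω (i + 1) m := by
  simp only [window, List.range_succ_eq_map, List.map_cons, List.map_map, add_zero]
  congr 2
  funext j
  simp only [Function.comp_apply]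
  congr 1
  omega

theorem window_succ_eq_append (i m : ℕ) : window ω i (m + 1) = window ω i m ++ [ω (i + m)] := by
  simp [window, List.range_succ]

def IsRecurrent (u : List A) : Prop := ∃ᶠ i in atTop, window ω i u.length = u

def IsLeftSpecial (w : List A) : Prop :=
  ∃ x y, x ≠ y ∧ IsRecurrent ω (x :: w) ∧ IsRecurrent ω (y :: w)

def IsRightSpecial (w : List A) : Prop :=
  ∃ x y, x ≠ y ∧ IsRecurrent ω (w ++ [x]) ∧ IsRecurrent ω (w ++ [y])

variable {ω}

theorem IsRecurrent.isFactorOf {u : List A} (h : IsRecurrent ω u) : IsFactorOf u ω :=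
  let ⟨i, hi⟩ := h.exists
  ⟨i, hi.symm⟩

theorem IsRecurrent.tail {u : List A} (h : IsRecurrent ω u) : IsRecurrent ω u.tail := by
  obtain _ | ⟨a, t⟩ := u
  · exact h
  · refine frequently_atTop_add_one_iff.1 (h.mono fun i hi => ?_)
    rw [List.length_cons, window_succ] at hi
    exact (List.cons.inj hi).2

theorem IsRecurrent.dropLast {u : List A} (h : IsRecurrent ω u) : IsRecurrent ω u.dropLast := by
  induction u using List.reverseRecOn with
  | nil => exact h
  | append_singleton w b _ =>
    refine h.mono fun i hi => ?_
    rw [List.length_append, List.length_singleton, window_succ_eq_append] at hi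
    simpa using congrArg List.dropLast hi

variable [Finite A]

theorem IsRecurrent.exists_cons {u : List A} (h : IsRecurrent ω u) :
    ∃ a, IsRecurrent ω (a :: u) := by
  refine frequently_exists.1 ((frequently_atTop_add_one_iff.2 h).mono fun i hi => ⟨ω i, ?_⟩)
  rw [List.length_cons, window_succ, hi]

theorem IsRecurrent.exists_append_singleton {u : List A} (h : IsRecurrent ω u) :
    ∃ a, IsRecurrent ω (u ++ [a]) := by
  refine frequently_exists.1 (h.mono fun i hi => ⟨ω (i + u.length), ?_⟩)
  rw [List.length_append, List.length_singleton, window_succ_eq_append, hi]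

variable (ω)

theorem eventually_isRecurrent_window (m : ℕ) : ∀ᶠ i in atTop, IsRecurrent ω (window ω i m) := by
  have : Finite {u : List A // u.length = m} := (List.finite_length_eq A m).to_subtype
  have hall : ∀ᶠ i in atTop, ∀ u : {u : List A // u.length = m},
      IsRecurrent ω u ∨ window ω i m ≠ u := by
    refine eventually_all.2 fun u => ?_
    by_cases hu : IsRecurrent ω u
    · exact Eventually.of_forall fun _ => Or.inl hu
    · exact (not_frequently.1 hu).mono fun i hi => Or.inr (by simpa [u.2] using hi)
  exact hall.mono fun i hi => (hi ⟨window ω i m, length_window ω i m⟩).resolve_right (by simp)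

theorem ultimatelyPeriodic_of_window_eq_imp {m R : ℕ}
    (h : ∀ i ≥ R, ∀ j ≥ R, window ω i m = window ω j m → ω (i + m) = ω (j + m)) :
    UltimatelyPeriodic ω := by
  obtain ⟨s, hs, t, ht, hst, hwin⟩ := (Set.Ici_infinite R).exists_lt_map_eq_of_mapsTo
    (f := fun i => window ω i m) (fun i _ => length_window ω i m) (List.finite_length_eq A m)
  have hnext : ∀ d, window ω (s + d) m = window ω (t + d) m →
      window ω (s + d) (m + 1) = window ω (t + d) (m + 1) := fun d hd => by
    rw [window_succ_eq_append, window_succ_eq_append, hd,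
      h _ (by simp at hs; omega) _ (by simp at ht; omega) hd]
  have hall : ∀ d, window ω (s + d) m = window ω (t + d) m := by
    intro d
    induction d with
    | zero => exact hwin
    | succ d ih =>
      have := hnext d ih
      rw [window_succ, window_succ] at this
      exact (List.cons.inj this).2
  refine ⟨t - s, by omega, s, fun i hi => ?_⟩
  have := hnext (i - s) (hall _)
  rw [window_succ, window_succ] at this
  convert (List.cons.inj this).1.symm using 2 <;> omega

theorem exists_isRightSpecial (hω : ¬ UltimatelyPeriodic ω) (m : ℕ) :
    ∃ w : List A, w.length = m ∧ IsRightSpecial ω w := by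
  by_contra! hc
  obtain ⟨R, hR⟩ := eventually_atTop.1 (eventually_isRecurrent_window ω (m + 1))
  refine hω (ultimatelyPeriodic_of_window_eq_imp ω (m := m) (R := R) fun i hi j hj hij => ?_)
  by_contra hne
  refine hc (window ω i m) (length_window ω i m) ⟨_, _, hne, ?_, ?_⟩
  · rw [← window_succ_eq_append]; exact hR i hi
  · rw [hij, ← window_succ_eq_append]; exact hR j hj

noncomputable def recFactors (n : ℕ) : Finset (List A) :=
  ((List.finite_length_eq A n).subset fun (u : List A) (hu : u.length = n ∧ IsRecurrent ω u) =>
    hu.1).toFinset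

variable {ω} in
@[simp] theorem mem_recFactors {n : ℕ} {u : List A} :
    u ∈ recFactors ω n ↔ u.length = n ∧ IsRecurrent ω u :=
  Set.Finite.mem_toFinset _

theorem image_tail_recFactors [DecidableEq A] (n : ℕ) :
    (recFactors ω (n + 1)).image List.tail = recFactors ω n := by
  ext w
  simp only [Finset.mem_image, mem_recFactors]
  constructor
  · rintro ⟨u, ⟨hu, hr⟩, rfl⟩
    exact ⟨by simp [hu], hr.tail⟩
  · rintro ⟨hw, hr⟩
    obtain ⟨a, ha⟩ := hr.exists_cons
    exact ⟨a :: w, ⟨by simp [hw], ha⟩, rfl⟩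

theorem image_dropLast_recFactors [DecidableEq A] (n : ℕ) :
    (recFactors ω (n + 1)).image List.dropLast = recFactors ω n := by
  ext w
  simp only [Finset.mem_image, mem_recFactors]
  constructor
  · rintro ⟨u, ⟨hu, hr⟩, rfl⟩
    exact ⟨by simp [hu], hr.dropLast⟩
  · rintro ⟨hw, hr⟩
    obtain ⟨a, ha⟩ := hr.exists_append_singleton
    exact ⟨w ++ [a], ⟨by simp [hw], ha⟩, by simp⟩

theorem exists_isLeftSpecial (hω : ¬ UltimatelyPeriodic ω) (m : ℕ) :
    ∃ w : List A, w.length = m ∧ IsLeftSpecial ω w := by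
  classical
  by_contra! hc
  -- `tail` and `dropLast` both map `recFactors ω (m + 1)` onto `recFactors ω m`; the first is
  -- injective when no factor of length `m` is left special, the second is not
  obtain ⟨w, hw, x, y, hxy, hx, hy⟩ := exists_isRightSpecial ω hω m
  have htail : Set.InjOn List.tail (recFactors ω (m + 1) : Set (List A)) := by
    rintro (_ | ⟨a, t⟩) hu (_ | ⟨b, t'⟩) hv h <;> simp at hu hv
    obtain rfl : t = t' := h
    by_contra hab
    exact hc t (by simpa using hu.1) ⟨a, b, fun h => hab (h ▸ rfl), hu.2, hv.2⟩
  have hdropLast : ¬ Set.InjOn List.dropLast (recFactors ω (m + 1) : Set (List A)) := by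
    intro hinj
    have := hinj (x₁ := w ++ [x]) (x₂ := w ++ [y]) (by simp [hw, hx]) (by simp [hw, hy]) (by simp)
    simp [hxy] at this
  rw [← Finset.card_image_iff] at htail hdropLast
  have hle := Finset.card_image_le (s := recFactors ω (m + 1)) (f := List.dropLast)
  rw [image_tail_recFactors] at htail
  rw [image_dropLast_recFactors] at hdropLast hle
  omega

end Recurrence

section Classes

variable {A : Type*} [DecidableEq A]

def kabSetoid (k : ℕ∞) : Setoid (List A) where
  r := KAbEqE k
  iseqv := ⟨fun _ _ _ _ => rfl, fun h x hx hxk => (h x hx hxk).symm,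
    fun h₁ h₂ x hx hxk => (h₁ x hx hxk).trans (h₂ x hx hxk)⟩

section Finite

variable [Finite A]

theorem exists_not_kabEqE_one {ω : ℕ → A} (hω : ¬ UltimatelyPeriodic ω) {n : ℕ}
    (hn : 1 ≤ n) : ∃ u ∈ recFactors ω n, ∃ v ∈ recFactors ω n, ¬ KAbEqE 1 u v := by
  by_contra! hc
  obtain ⟨R, hR⟩ := eventually_atTop.1 (eventually_isRecurrent_window ω n)
  refine hω ⟨n, hn, R, fun i hi => ?_⟩
  -- count the letter `ω i` in `window ω i (n + 1)` after removing its last, resp. first, letter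
  have hab : occ (window ω i n) [ω i] = occ (window ω (i + 1) n) [ω i] :=
    hc _ (by simp [hR i hi]) _ (by simp [hR (i + 1) (by omega)]) [ω i] (by simp) (by simp)
  have hcons : occ (window ω i (n + 1)) [ω i] = 1 + occ (window ω (i + 1) n) [ω i] := by
    simp [window_succ, occ_cons]
  have hsnoc : occ (window ω i (n + 1)) [ω i]
      = occ (window ω i n) [ω i] + if ω (i + n) = ω i then 1 else 0 := by
    simp [window_succ_eq_append, occ_append_singleton, List.singleton_suffix_iff_getLast?_eq_some]
  by_contra hne
  simp only [hne, if_false] at hsnoc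
  omega

open scoped Classical in
noncomputable def kabClasses (ω : ℕ → A) (k : ℕ∞) (n : ℕ) :
    Finset (Quotient (kabSetoid (A := A) k)) :=
  (recFactors ω n).image (Quotient.mk _)

theorem mem_kabClasses {ω : ℕ → A} {k : ℕ∞} {n : ℕ} {c : Quotient (kabSetoid k)} :
    c ∈ kabClasses ω k n ↔ ∃ u ∈ recFactors ω n, ⟦u⟧ = c := by
  classical
  exact Finset.mem_image

variable (ω : ℕ → A)

theorem card_kabClasses_le_kabComplexityE {m K : ℕ∞} (hmK : m ≤ K) (n : ℕ) :
    (kabClasses ω m n).card ≤ kabComplexityE ω K n := by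
  have : Finite {u : List A // u.length = n ∧ IsFactorOf u ω} :=
    ((List.finite_length_eq A n).subset fun _ hu => hu.1).to_subtype
  let g : Quotient (factorSetoidE ω K n) → Quotient (kabSetoid m) :=
    Quotient.map Subtype.val fun _ _ h => KAbEqE.mono hmK h
  have hsub : (kabClasses ω m n : Set (Quotient (kabSetoid m))) ⊆ Set.range g := by
    intro c hc
    obtain ⟨u, hu, rfl⟩ := mem_kabClasses.1 hc
    rw [mem_recFactors] at hu
    exact ⟨⟦⟨u, hu.1, hu.2.isFactorOf⟩⟧, rfl⟩
  calc (kabClasses ω m n).card = (kabClasses ω m n : Set _).ncard := (Set.ncard_coe_finset _).symm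
    _ ≤ (Set.range g).ncard := Set.ncard_le_ncard hsub (Set.finite_range g)
    _ ≤ kabComplexityE ω K n := (Nat.card_coe_set_eq _).symm.trans_le (Finite.card_range_le g)

theorem kabClasses_nonempty (k : ℕ∞) (n : ℕ) : (kabClasses ω k n).Nonempty := by
  obtain ⟨i, hi⟩ := (eventually_isRecurrent_window ω n).exists
  exact ⟨_, mem_kabClasses.2 ⟨window ω i n, by simp [hi], rfl⟩⟩

variable {ω}

theorem two_le_card_kabClasses (hω : ¬ UltimatelyPeriodic ω) {k : ℕ∞} (hk : 1 ≤ k) {n : ℕ}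
    (hn : 1 ≤ n) : 2 ≤ (kabClasses ω k n).card := by
  obtain ⟨u, hu, v, hv, huv⟩ := exists_not_kabEqE_one hω hn
  refine Finset.one_lt_card.2 ⟨⟦u⟧, mem_kabClasses.2 ⟨u, hu, rfl⟩, ⟦v⟧,
    mem_kabClasses.2 ⟨v, hv, rfl⟩, fun h => huv ?_⟩
  exact KAbEqE.mono hk (Quotient.exact h)

end Finite

variable [Fintype A] {ω : ℕ → A}

def trimClass (k : ℕ∞) :
    Quotient (kabSetoid (A := A) (k + 1)) → Quotient (kabSetoid (A := A) k) :=
  Quotient.map (fun u => u.tail.dropLast) fun _ _ h => KAbEqE.tail_dropLast h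

@[simp] theorem trimClass_mk (k : ℕ∞) (u : List A) :
    trimClass k ⟦u⟧ = (⟦u.tail.dropLast⟧ : Quotient (kabSetoid k)) :=
  rfl

open scoped Classical in
theorem image_trimClass_kabClasses (k : ℕ∞) (n : ℕ) :
    (kabClasses ω (k + 1) (n + 2)).image (trimClass k) = kabClasses ω k n := by
  ext c
  simp only [Finset.mem_image, mem_kabClasses, mem_recFactors]
  constructor
  · rintro ⟨_, ⟨u, ⟨hu, hr⟩, rfl⟩, rfl⟩
    exact ⟨u.tail.dropLast, ⟨by simp [hu], hr.tail.dropLast⟩, rfl⟩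
  · rintro ⟨w, ⟨hw, hr⟩, rfl⟩
    obtain ⟨a, ha⟩ := hr.exists_cons
    obtain ⟨b, hb⟩ := ha.exists_append_singleton
    exact ⟨_, ⟨a :: w ++ [b], ⟨by simp [hw], hb⟩, rfl⟩, by simp⟩

theorem card_kabClasses_add_two_le (hω : ¬ UltimatelyPeriodic ω) {k : ℕ∞} (hk : 1 ≤ k) (n : ℕ) :
    (kabClasses ω k n).card + 2 ≤ (kabClasses ω (k + 1) (n + 2)).card := by
  classical
  have hk₂ : 2 ≤ k + 1 := by rw [← one_add_one_eq_two]; gcongr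
  obtain ⟨wL, hwL, x₁, y₁, hxy₁, hx₁, hy₁⟩ := exists_isLeftSpecial ω hω (n + 1)
  obtain ⟨wR, hwR, x₂, y₂, hxy₂, hx₂, hy₂⟩ := exists_isRightSpecial ω hω (n + 1)
  have hwR₀ : wR ≠ [] := List.ne_nil_of_length_pos (by omega)
  let head : Quotient (kabSetoid (A := A) (k + 1)) → Option A :=
    Quotient.lift List.head? fun _ _ h => KAbEqE.head?_eq hk₂ h
  have hhead : ∀ c ∈ ({⟦wR ++ [x₂]⟧, ⟦wR ++ [y₂]⟧} : Finset (Quotient (kabSetoid (k + 1)))),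
      head c = wR.head? := by
    simp [head, List.head?_append_of_ne_nil _ hwR₀]
  rw [← image_trimClass_kabClasses]
  -- the left special pair has two first letters, the right special pair only one
  refine Finset.card_image_add_two_le (a₁ := ⟦x₁ :: wL⟧) (a₂ := ⟦y₁ :: wL⟧) (b₁ := ⟦wR ++ [x₂]⟧)
    (b₂ := ⟦wR ++ [y₂]⟧) ?_ ?_ ?_ ?_ ?_ ?_ rfl ?_ ?_
  · exact mem_kabClasses.2 ⟨_, by simp [hwL, hx₁], rfl⟩
  · exact mem_kabClasses.2 ⟨_, by simp [hwL, hy₁], rfl⟩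
  · exact mem_kabClasses.2 ⟨_, by simp [hwR, hx₂], rfl⟩
  · exact mem_kabClasses.2 ⟨_, by simp [hwR, hy₂], rfl⟩
  · intro h
    simpa [hxy₁] using (Quotient.exact h).head?_eq hk₂
  · intro h
    simpa [hxy₂] using (Quotient.exact h).getLast?_eq hk₂
  · simp [List.tail_append_of_ne_nil hwR₀]
  · intro h
    have h₁ := hhead ⟦x₁ :: wL⟧ (h ▸ by simp)
    have h₂ := hhead ⟦y₁ :: wL⟧ (h ▸ by simp)
    simp only [head, Quotient.lift_mk, List.head?_cons] at h₁ h₂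
    exact hxy₁ (Option.some.inj (h₁.trans h₂.symm))

theorem min_le_card_kabClasses (hω : ¬ UltimatelyPeriodic ω) :
    ∀ k n : ℕ, min (n + 1) (2 * k) ≤ (kabClasses ω k n).card
  | 0, _ => by simp
  | _ + 1, 0 => (min_le_left _ _).trans (kabClasses_nonempty ω _ 0).card_pos
  | 1, n + 1 => (min_le_right _ _).trans (two_le_card_kabClasses hω le_rfl (by omega))
  | _ + 2, 1 =>
    (min_le_left _ _).trans (two_le_card_kabClasses hω (Nat.one_le_cast.2 (by omega)) le_rfl)
  | k + 2, n + 2 => by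
    rw [show ((k + 2 : ℕ) : ℕ∞) = ((k + 1 : ℕ) : ℕ∞) + 1 from Nat.cast_succ _]
    have := min_le_card_kabClasses hω (k + 1) n
    have := card_kabClasses_add_two_le hω (Nat.one_le_cast.2 (by omega : 1 ≤ k + 1)) n
    omega

end Classes

theorem qAux_top (n : ℕ) : qAux ⊤ n = n + 1 := by
  simp [qAux]

theorem qAux_coe (k n : ℕ) : qAux k n = min (n + 1) (2 * k) := by
  have h2k : (2 : ℕ∞) * k = (2 * k : ℕ) := by push_cast; rfl
  simp only [qAux, h2k, Nat.cast_lt, ENat.toNat_natCast]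
  split_ifs <;> omega

theorem stmt13_general {A : Type*} [Fintype A] [DecidableEq A] (ω : ℕ → A) (k : ℕ∞)
    (n₀ : ℕ) (h : kabComplexityE ω k n₀ < qAux k n₀) :
    UltimatelyPeriodic ω := by
  by_contra hω
  refine h.not_ge ?_
  induction k using ENat.recTopCoe with
  | top =>
    calc qAux ⊤ n₀ = min (n₀ + 1) (2 * (n₀ + 1)) := by rw [qAux_top]; omega
      _ ≤ (kabClasses ω (n₀ + 1 : ℕ) n₀).card := min_le_card_kabClasses hω _ _
      _ ≤ kabComplexityE ω ⊤ n₀ := card_kabClasses_le_kabComplexityE ω le_top n₀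
  | coe m =>
    rw [qAux_coe]
    exact (min_le_card_kabClasses hω m n₀).trans (card_kabClasses_le_kabComplexityE ω le_rfl n₀)

theorem stmt13 {A : Type*} [Fintype A] [DecidableEq A] (ω : ℕ → A) (k : ℕ∞) (hk : 1 ≤ k)
    (n₀ : ℕ) (hn₀ : 1 ≤ n₀) (h : kabComplexityE ω k n₀ < qAux k n₀) :
    UltimatelyPeriodic ω :=
  stmt13_general ω k n₀ h
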